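/- The language L = (a ∥ b)^⊕ ⊆ SP⁺({a,b}), consisting of all labeled antichains with equally many a's and b's (at least one of each), is not recognizable by any finite sp-algebra. -/

import Mathlib

/-- An sp-algebra: a set with an associative sequential product and an
associative, commutative parallel product. -/
structure SPAlg (S : Type*) where
  seq : S → S → S
  par : S → S → S
  seq_assoc : ∀ a b c, seq (seq a b) c = seq a (seq b c)
  par_assoc : ∀ a b c, par (par a b) c = par a (par b c)
  par_comm : ∀ a b, par a b = par b a

/-- Terms over an sp-algebra carrier `S`: built from variables (indexed by `ℕ`)
and elements of `S` using the two products. -/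
inductive SPTerm (S : Type*) where
  | var : ℕ → SPTerm S
  | const : S → SPTerm S
  | seq : SPTerm S → SPTerm S → SPTerm S
  | par : SPTerm S → SPTerm S → SPTerm S

/-- Evaluation of a term under an assignment of the variables. -/
def SPTerm.eval {S : Type*} (A : SPAlg S) (σ : ℕ → S) : SPTerm S → S
  | .var i => σ i
  | .const s => s
  | .seq t u => A.seq (t.eval A σ) (u.eval A σ)
  | .par t u => A.par (t.eval A σ) (u.eval A σ)

/-- The syntactic relation of `L ⊆ S`: `x ∼_L y` iff for every term (with
distinguished variable `0`) and every substitution of the other variables by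
elements of `S`, substituting `x` yields a value in `L` iff substituting `y` does. -/
def SyntRel {S : Type*} (A : SPAlg S) (L : Set S) (x y : S) : Prop :=
  ∀ (t : SPTerm S) (σ : ℕ → S),
    t.eval A (Function.update σ 0 x) ∈ L ↔ t.eval A (Function.update σ 0 y) ∈ L

/-- A morphism of sp-algebras. -/
def IsSPHom {S T : Type*} (A : SPAlg S) (B : SPAlg T) (f : S → T) : Prop :=
  (∀ a b, f (A.seq a b) = B.seq (f a) (f b)) ∧ (∀ a b, f (A.par a b) = B.par (f a) (f b))

/-- Nonempty series-parallel expressions over the alphabet `A`. -/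
inductive PreSP (A : Type*) where
  | of : A → PreSP A
  | seq : PreSP A → PreSP A → PreSP A
  | par : PreSP A → PreSP A → PreSP A

/-- The congruence generated by the sp-algebra laws. -/
inductive PreRel (A : Type*) : PreSP A → PreSP A → Prop
  | refl (t) : PreRel A t t
  | symm {t u} : PreRel A t u → PreRel A u t
  | trans {t u v} : PreRel A t u → PreRel A u v → PreRel A t v
  | seq_congr {a a' b b'} : PreRel A a a' → PreRel A b b' →
      PreRel A (.seq a b) (.seq a' b')
  | par_congr {a a' b b'} : PreRel A a a' → PreRel A b b' →
      PreRel A (.par a b) (.par a' b')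
  | seq_assoc (a b c) : PreRel A (.seq (.seq a b) c) (.seq a (.seq b c))
  | par_assoc (a b c) : PreRel A (.par (.par a b) c) (.par a (.par b c))
  | par_comm (a b) : PreRel A (.par a b) (.par b a)

/-- The free sp-algebra on `A`, isomorphic to `SP⁺(A)`, the sp-algebra of nonempty
finite N-free posets labeled by `A`. -/
def FreeSP (A : Type*) := Quot (PreRel A)

def FreeSP.of {A : Type*} (a : A) : FreeSP A := Quot.mk _ (.of a)

def FreeSP.seq {A : Type*} : FreeSP A → FreeSP A → FreeSP A :=
  Quot.map₂ PreSP.seq (fun a _ _ h => PreRel.seq_congr (PreRel.refl a) h)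
    (fun _ _ b h => PreRel.seq_congr h (PreRel.refl b))

def FreeSP.par {A : Type*} : FreeSP A → FreeSP A → FreeSP A :=
  Quot.map₂ PreSP.par (fun a _ _ h => PreRel.par_congr (PreRel.refl a) h)
    (fun _ _ b h => PreRel.par_congr h (PreRel.refl b))

/-- The free sp-algebra structure on `FreeSP A`. -/
def freeSPAlg (A : Type*) : SPAlg (FreeSP A) where
  seq := FreeSP.seq
  par := FreeSP.par
  seq_assoc := fun a b c => by
    induction a using Quot.ind
    induction b using Quot.ind
    induction c using Quot.ind
    exact Quot.sound (PreRel.seq_assoc _ _ _)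
  par_assoc := fun a b c => by
    induction a using Quot.ind
    induction b using Quot.ind
    induction c using Quot.ind
    exact Quot.sound (PreRel.par_assoc _ _ _)
  par_comm := fun a b => by
    induction a using Quot.ind
    induction b using Quot.ind
    exact Quot.sound (PreRel.par_comm _ _)

/-- The two-letter alphabet `{a, b}`. -/
inductive AB where
  | a : AB
  | b : AB
deriving DecidableEq

instance instFintypeAB : Fintype AB :=
  ⟨{AB.a, AB.b}, fun x => by cases x <;> simp⟩

/-- `x^{∥(n+1)}`: the parallel composition of `n + 1` copies of `x`. -/
def parPow {A : Type*} (x : FreeSP A) : ℕ → FreeSP A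
  | 0 => x
  | n + 1 => (freeSPAlg A).par x (parPow x n)

/-- `(a ∥ b)^⊕ ⊆ SP⁺({a,b})`: all parallel compositions of `n ≥ 1` copies of
`a ∥ b`, i.e. the labeled antichains with equally many `a`'s and `b`'s. -/
def aParB_plus : Set (FreeSP AB) :=
  {P | ∃ n : ℕ, P = parPow ((freeSPAlg AB).par (FreeSP.of AB.a) (FreeSP.of AB.b)) n}

/-!
A morphism into a finite sp-algebra must identify two parallel powers `a^{∥m}` and `a^{∥n}`
with `m ≠ n`. Then `a^{∥n} ∥ b^{∥m}` has the same image as `a^{∥m} ∥ b^{∥m} = (a ∥ b)^{∥m}`, so a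
saturated language containing `(a ∥ b)^⊕` would also contain it, although its numbers of `a`'s
and `b`'s differ. Letter counts are well defined on `SP⁺(A)` since the sp-laws preserve them.
-/

namespace PreSP

variable {A : Type*} [DecidableEq A]

def count (c : A) : PreSP A → ℕ
  | .of x => if x = c then 1 else 0
  | .seq t u => count c t + count c u
  | .par t u => count c t + count c u

theorem count_eq_of_preRel (c : A) {t u : PreSP A} (h : PreRel A t u) :
    count c t = count c u := by
  induction h <;> simp [count, *] <;> omega

end PreSP

namespace FreeSP

variable {A : Type*} [DecidableEq A]

def count (c : A) : FreeSP A → ℕ :=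
  Quot.lift (PreSP.count c) fun _ _ => PreSP.count_eq_of_preRel c

theorem count_of (c x : A) : count c (of x) = if x = c then 1 else 0 := rfl

theorem count_par (c : A) (x y : FreeSP A) :
    count c ((freeSPAlg A).par x y) = count c x + count c y := by
  induction x using Quot.ind
  induction y using Quot.ind
  rfl

theorem count_parPow (c : A) (x : FreeSP A) (n : ℕ) :
    count c (parPow x n) = (n + 1) * count c x := by
  induction n with
  | zero => simp [parPow]
  | succ n ih => rw [parPow, count_par, ih]; ring

end FreeSP

theorem SPAlg.par_par_par_comm {S : Type*} (A : SPAlg S) (x y z w : S) :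
    A.par (A.par x y) (A.par z w) = A.par (A.par x z) (A.par y w) := by
  rw [A.par_assoc, ← A.par_assoc y, A.par_comm y z, A.par_assoc, ← A.par_assoc]

theorem parPow_par_parPow {A : Type*} (x y : FreeSP A) (n : ℕ) :
    (freeSPAlg A).par (parPow x n) (parPow y n) = parPow ((freeSPAlg A).par x y) n := by
  induction n with
  | zero => rfl
  | succ n ih => rw [parPow, parPow, SPAlg.par_par_par_comm, ih, parPow]

theorem eq_of_parPow_par_parPow_mem_aParB_plus {m n : ℕ}
    (h : (freeSPAlg AB).par (parPow (.of .a) m) (parPow (.of .b) n) ∈ aParB_plus) :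
    m = n := by
  obtain ⟨k, hk⟩ := h
  have count_a := congrArg (FreeSP.count .a) hk
  have count_b := congrArg (FreeSP.count .b) hk
  simp only [FreeSP.count_par, FreeSP.count_parPow, FreeSP.count_of, ↓reduceIte, reduceCtorEq,
    mul_one, mul_zero, add_zero, zero_add] at count_a count_b
  omega

/-- The language `(a ∥ b)^⊕` is not recognizable by any finite sp-algebra: there is
no finite sp-algebra `T` and morphism `f : SP⁺({a,b}) → T` with
`L = f⁻¹(f(L))`. -/
theorem aParB_plus_not_recognizable :
    ¬ ∃ (T : Type) (_ : Fintype T) (Ta : SPAlg T) (f : FreeSP AB → T),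
        IsSPHom (freeSPAlg AB) Ta f ∧ aParB_plus = f ⁻¹' (f '' aParB_plus) := by
  rintro ⟨T, _, Ta, f, ⟨-, map_par⟩, saturated⟩
  obtain ⟨m, n, hmn, hf⟩ :=
    Finite.exists_ne_map_eq_of_infinite fun n : ℕ => f (parPow (.of .a) n)
  have mem : (freeSPAlg AB).par (parPow (.of .a) n) (parPow (.of .b) m) ∈ aParB_plus := by
    rw [saturated]
    refine ⟨(freeSPAlg AB).par (parPow (.of .a) m) (parPow (.of .b) m),
      ⟨m, parPow_par_parPow _ _ m⟩, ?_⟩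
    simp only [map_par, hf]
  exact hmn (eq_of_parPow_par_parPow_mem_aParB_plus mem).symm
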